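/- arXiv:2303.11712 — 2 statements merged into one kernel-verified Lean document; each statement's English description precedes it below -/
import Mathlib

section
/- Let F be a formula (a finite set of clauses) and S ⊆ F. Then S is unsatisfiable if and only if S ∩ C ≠ ∅ for every Minimal Correction Subset (MCS) C of F. -/
/-- A literal is an atom paired with a Boolean polarity. -/
abbrev Lit (V : Type*) := V × Bool

/-- A clause is a finite set of literals. -/
abbrev Clause (V : Type*) := Finset (V × Bool)

/-- A formula is a finite set of clauses. -/
abbrev Formula (V : Type*) := Finset (Clause V)

/-- An assignment satisfies a literal `(x, b)` iff it assigns `b` to `x`. -/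
def SatLit {V : Type*} (v : V → Bool) (l : Lit V) : Prop := v l.1 = l.2

/-- An assignment satisfies a clause iff it satisfies some literal of it. -/
def SatClause {V : Type*} (v : V → Bool) (c : Clause V) : Prop := ∃ l ∈ c, SatLit v l

/-- An assignment satisfies a formula iff it satisfies every clause of it. -/
def SatFm {V : Type*} (v : V → Bool) (F : Formula V) : Prop := ∀ c ∈ F, SatClause v c

/-- A formula is satisfiable iff some assignment satisfies it. -/
def Satisfiable' {V : Type*} (F : Formula V) : Prop := ∃ v, SatFm v F

/-- A correction subset of `F`: a subset `S ⊆ F` with `F \ S` satisfiable. -/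
def IsCorrection {V : Type*} [DecidableEq V] (F S : Formula V) : Prop :=
  S ⊆ F ∧ Satisfiable' (F \ S)

/-- An MCS of `F`: a correction subset of `F` no strict subset of which is a
correction subset of `F`. -/
def IsMCS {V : Type*} [DecidableEq V] (F S : Formula V) : Prop :=
  IsCorrection F S ∧ ∀ S' ⊂ S, ¬ IsCorrection F S'

lemma exists_mcs_subset {V : Type*} [DecidableEq V] (F : Formula V) :
    ∀ S : Formula V, IsCorrection F S → ∃ C ⊆ S, IsMCS F C := by
  intro S
  induction S using Finset.strongInduction with
  | _ S ih =>
    intro hS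
    by_cases h : ∀ S' ⊂ S, ¬ IsCorrection F S'
    · exact ⟨S, le_refl _, hS, h⟩
    · push_neg at h
      obtain ⟨S', hsub, hS'⟩ := h
      obtain ⟨C, hCS', hC⟩ := ih S' hsub hS'
      exact ⟨C, hCS'.trans hsub.subset, hC⟩

theorem unsat_iff_hits_all_mcses {V : Type*} [DecidableEq V]
    (F S : Formula V) (hSF : S ⊆ F) :
    ¬ Satisfiable' S ↔ ∀ C, IsMCS F C → (S ∩ C).Nonempty := by
  constructor
  · intro hunsat C hC
    rw [Finset.nonempty_iff_ne_empty]
    intro hempty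
    obtain ⟨v, hv⟩ := hC.1.2
    exact hunsat ⟨v, fun c hc => hv c (Finset.mem_sdiff.2 ⟨hSF hc,
      fun hcC => Finset.notMem_empty c (hempty ▸ Finset.mem_inter.2 ⟨hc, hcC⟩)⟩)⟩
  · intro hall ⟨v, hv⟩
    classical
    set D : Formula V := F.filter (fun c => ¬ SatClause v c) with hD
    have hcorr : IsCorrection F D := by
      refine ⟨Finset.filter_subset _ _, v, fun c hc => ?_⟩
      rw [Finset.mem_sdiff, hD, Finset.mem_filter] at hc
      by_contra h
      exact hc.2 ⟨hc.1, h⟩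
    obtain ⟨C, hCD, hC⟩ := exists_mcs_subset F D hcorr
    obtain ⟨c, hcmem⟩ := hall C hC
    rw [Finset.mem_inter] at hcmem
    have := hCD hcmem.2
    rw [hD, Finset.mem_filter] at this
    exact this.2 (hv c hcmem.1)
end

section
/- Let F be a formula (a finite set of clauses) and S ⊆ F. Then S is a correction subset of F if and only if S ∩ M ≠ ∅ for every Minimal Unsatisfiable Subset (MUS) M of F. -/
/-- A MUS of `F`: an unsatisfiable subset of `F` all of whose strict subsets are satisfiable. -/
def IsMUS {V : Type*} (F S : Formula V) : Prop :=
  S ⊆ F ∧ ¬ Satisfiable' S ∧ ∀ S' ⊂ S, Satisfiable' S'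

lemma sat_mono {V : Type*} {F G : Formula V} (h : F ⊆ G) (hG : Satisfiable' G) :
    Satisfiable' F := by
  obtain ⟨v, hv⟩ := hG
  exact ⟨v, fun c hc => hv c (h hc)⟩

lemma exists_mus {V : Type*} (G : Formula V) (hG : ¬ Satisfiable' G) :
    ∃ M ⊆ G, IsMUS G M := by
  induction G using Finset.strongInduction with
  | _ G ih =>
    by_cases h : ∀ S' ⊂ G, Satisfiable' S'
    · exact ⟨G, subset_rfl, subset_rfl, hG, h⟩
    · push_neg at h
      obtain ⟨S', hlt, hS'⟩ := h
      obtain ⟨M, hMS, hM⟩ := ih S' hlt hS'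
      exact ⟨M, hMS.trans hlt.subset, hM.1.trans hlt.subset, hM.2⟩

theorem correction_subset_iff_hits_all_muses {V : Type*} [DecidableEq V]
    (F S : Formula V) (hSF : S ⊆ F) :
    IsCorrection F S ↔ ∀ M, IsMUS F M → (S ∩ M).Nonempty := by
  constructor
  · rintro ⟨-, hsat⟩ M hM
    by_contra hne
    rw [Finset.not_nonempty_iff_eq_empty] at hne
    have hMsub : M ⊆ F \ S := fun c hc => Finset.mem_sdiff.2 ⟨hM.1 hc,
      fun hcS => (Finset.notMem_empty c) (hne ▸ Finset.mem_inter.2 ⟨hcS, hc⟩)⟩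
    exact hM.2.1 (sat_mono hMsub hsat)
  · intro h
    refine ⟨hSF, ?_⟩
    by_contra hunsat
    obtain ⟨M, hMsub, _, hMuns, hMmin⟩ := exists_mus _ hunsat
    have hMF : M ⊆ F := hMsub.trans (Finset.sdiff_subset)
    obtain ⟨c, hc⟩ := h M ⟨hMF, hMuns, hMmin⟩
    rw [Finset.mem_inter] at hc
    exact (Finset.mem_sdiff.1 (hMsub hc.2)).2 hc.1
end
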